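/- arXiv:2208.12307 — 2 statements merged into one kernel-verified Lean document; each statement's English description precedes it below -/
import Mathlib

section
/- Let r be a positive integer, w = (w₁, w₁', w₂, w₂') ∈ ℤ≥0⁴ and v = (v₁, v₂) ∈ ℤ≥0². Set v̄₁ = min(v₁, w₁', w₁ + r·v₂, w₁ + r·w₂) and v̄₂ = min(v₂, w₂, w₂' + r·v₁, w₂' + r·w₁'). Then E_{v,w} = E_{v̄,w}, i.e. for every tuple (x₁, x₂, y₁, …, y_r) ∈ E_w one has (rank A ≤ v₁ and rank B ≤ v₂) if and only if (rank A ≤ v̄₁ and rank B ≤ v̄₂). -/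
open Matrix

noncomputable section

/-- The space `E_w` of tuples `(x₁, x₂, y₁, …, y_r)` of complex matrices, where `x₁` has size
`w₁'×w₁`, `x₂` has size `w₂'×w₂`, and each `y_h` has size `w₁'×w₂`. -/
abbrev EW (r w₁ w₁' w₂ w₂' : ℕ) : Type :=
  Matrix (Fin w₁') (Fin w₁) ℂ × Matrix (Fin w₂') (Fin w₂) ℂ ×
    (Fin r → Matrix (Fin w₁') (Fin w₂) ℂ)

/-- The horizontally concatenated block matrix `A = [x₁ y₁ ⋯ y_r]`. -/
def matA {r m a b : ℕ} (x₁ : Matrix (Fin m) (Fin a) ℂ)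
    (y : Fin r → Matrix (Fin m) (Fin b) ℂ) :
    Matrix (Fin m) (Fin a ⊕ Fin r × Fin b) ℂ :=
  Matrix.of fun i => Sum.elim (fun j => x₁ i j) (fun p => y p.1 i p.2)

/-- The vertically stacked block matrix `B = [x₂; y₁; ⋯; y_r]`. -/
def matB {r n a b : ℕ} (x₂ : Matrix (Fin a) (Fin n) ℂ)
    (y : Fin r → Matrix (Fin b) (Fin n) ℂ) :
    Matrix (Fin a ⊕ Fin r × Fin b) (Fin n) ℂ :=
  Matrix.of fun i j => Sum.elim (fun i₂ => x₂ i₂ j) (fun p => y p.1 p.2 j) i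

/-- The subspace `ℂ^{w₂'} × X₁^{×r}` of `ℂ^{w₂'} × (ℂ^{w₁'})^r`: all tuples `(a, u₁, …, u_r)`
whose last `r` components `u_h` all lie in `X₁`. -/
def prodSub (r w₂' w₁' : ℕ) (X₁ : Submodule ℂ (Fin w₁' → ℂ)) :
    Submodule ℂ (Fin w₂' ⊕ Fin r × Fin w₁' → ℂ) :=
  ⨅ h : Fin r, X₁.comap (LinearMap.funLeft ℂ ℂ fun i => Sum.inr (h, i))

/-!
Each `y_h` is a block of both `A` and `B`, so its rank is at most `min (rank A) (rank B)`.
The column space of `A` is spanned by those of `x₁, y₁, …, y_r`, so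
`rank A ≤ w₁ + Σ rank y_h ≤ w₁ + r · rank B`, and dually `rank B ≤ w₂' + r · rank A`.
The remaining bounds are the sizes of `A` and `B`.
-/

open Module Submodule Set

lemma Submodule.finrank_finset_sup_le_sum {K V ι : Type*} [DivisionRing K] [AddCommGroup V]
    [Module K V] [FiniteDimensional K V] (p : ι → Submodule K V) (s : Finset ι) :
    finrank K ↥(s.sup p) ≤ ∑ i ∈ s, finrank K ↥(p i) := by
  classical
  induction s using Finset.induction_on with
  | empty => simp
  | insert i s hi ih =>
    rw [Finset.sup_insert, Finset.sum_insert hi]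
    exact (finrank_add_le_finrank_add_finrank _ _).trans (Nat.add_le_add_left ih _)

namespace Matrix

variable {K m n n₁ n₂ ι : Type*} [Field K] [Fintype m]

lemma rank_fromCols_le [Fintype n₁] [Fintype n₂] (A : Matrix m n₁ K) (B : Matrix m n₂ K) :
    (fromCols A B).rank ≤ A.rank + B.rank := by
  have hcols : range (fromCols A B).col = range A.col ∪ range B.col := by
    ext v
    simp [col_apply', fromCols]
  rw [rank_eq_finrank_span_cols, hcols, span_union, rank_eq_finrank_span_cols,
    rank_eq_finrank_span_cols]
  exact finrank_add_le_finrank_add_finrank _ _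

lemma rank_le_sum_rank_submatrix_prodMk [Fintype ι] [Fintype n] (M : Matrix m (ι × n) K) :
    M.rank ≤ ∑ i, (M.submatrix id (Prod.mk i)).rank := by
  have hcols : range M.col = ⋃ i, range (M.submatrix id (Prod.mk i)).col := by
    ext v
    simp [col_apply']
  rw [rank_eq_finrank_span_cols, hcols, span_iUnion, ← Finset.sup_univ_eq_iSup]
  simp only [rank_eq_finrank_span_cols]
  exact finrank_finset_sup_le_sum _ _

end Matrix

section BlockMatrices

variable {r m n a b : ℕ}

lemma rank_le_rank_matA (x : Matrix (Fin m) (Fin a) ℂ) (y : Fin r → Matrix (Fin m) (Fin b) ℂ)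
    (h : Fin r) : (y h).rank ≤ (matA x y).rank :=
  (matA x y).rank_submatrix_le id (fun j => Sum.inr (h, j))

lemma rank_le_rank_matB (x : Matrix (Fin a) (Fin n) ℂ) (y : Fin r → Matrix (Fin b) (Fin n) ℂ)
    (h : Fin r) : (y h).rank ≤ (matB x y).rank :=
  (matB x y).rank_submatrix_le (fun i => Sum.inr (h, i)) id

lemma rank_matA_le_add_mul {k : ℕ} (x : Matrix (Fin m) (Fin a) ℂ)
    (y : Fin r → Matrix (Fin m) (Fin b) ℂ) (hy : ∀ h, (y h).rank ≤ k) :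
    (matA x y).rank ≤ a + r * k :=
  calc (matA x y).rank
      ≤ x.rank + (of fun i (p : Fin r × Fin b) => y p.1 i p.2).rank := rank_fromCols_le _ _
    _ ≤ a + ∑ h, (y h).rank :=
      Nat.add_le_add x.rank_le_width (rank_le_sum_rank_submatrix_prodMk _)
    _ ≤ a + r * k := by
      grw [Finset.sum_le_sum fun h _ => hy h]
      simp

lemma matB_transpose (x : Matrix (Fin a) (Fin n) ℂ) (y : Fin r → Matrix (Fin b) (Fin n) ℂ) :
    (matB x y)ᵀ = matA xᵀ (fun h => (y h)ᵀ) :=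
  rfl

lemma rank_matB_le_add_mul {k : ℕ} (x : Matrix (Fin a) (Fin n) ℂ)
    (y : Fin r → Matrix (Fin b) (Fin n) ℂ) (hy : ∀ h, (y h).rank ≤ k) :
    (matB x y).rank ≤ a + r * k := by
  rw [← rank_transpose, matB_transpose]
  exact rank_matA_le_add_mul _ _ fun h => (rank_transpose _).trans_le (hy h)

end BlockMatrices

theorem stmt_4_general (r w₁ w₁' w₂ w₂' v₁ v₂ : ℕ)
    (p : EW r w₁ w₁' w₂ w₂') :
    ((matA p.1 p.2.2).rank ≤ v₁ ∧ (matB p.2.1 p.2.2).rank ≤ v₂) ↔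
    ((matA p.1 p.2.2).rank ≤ min (min v₁ w₁') (min (w₁ + r * v₂) (w₁ + r * w₂)) ∧
      (matB p.2.1 p.2.2).rank ≤ min (min v₂ w₂) (min (w₂' + r * v₁) (w₂' + r * w₁'))) := by
  obtain ⟨x₁, x₂, y⟩ := p
  refine ⟨fun ⟨hA, hB⟩ => ⟨?_, ?_⟩, fun ⟨hA, hB⟩ => ⟨hA.trans ?_, hB.trans ?_⟩⟩
  · exact le_min (le_min hA ((rank_le_card_height _).trans_eq (Fintype.card_fin _)))
      (le_min (rank_matA_le_add_mul x₁ y fun h => (rank_le_rank_matB x₂ y h).trans hB)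
        (rank_matA_le_add_mul x₁ y fun h => rank_le_width _))
  · exact le_min (le_min hB ((rank_le_card_width _).trans_eq (Fintype.card_fin _)))
      (le_min (rank_matB_le_add_mul x₂ y fun h => (rank_le_rank_matA x₁ y h).trans hA)
        (rank_matB_le_add_mul x₂ y fun h => rank_le_height _))
  all_goals exact (min_le_left _ _).trans (min_le_left _ _)

theorem stmt_4 (r w₁ w₁' w₂ w₂' v₁ v₂ : ℕ) (hr : 0 < r)
    (p : EW r w₁ w₁' w₂ w₂') :
    ((matA p.1 p.2.2).rank ≤ v₁ ∧ (matB p.2.1 p.2.2).rank ≤ v₂) ↔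
    ((matA p.1 p.2.2).rank ≤ min (min v₁ w₁') (min (w₁ + r * v₂) (w₁ + r * w₂)) ∧
      (matB p.2.1 p.2.2).rank ≤ min (min v₂ w₂) (min (w₂' + r * v₁) (w₂' + r * w₁'))) :=
  stmt_4_general r w₁ w₁' w₂ w₂' v₁ v₂ p
end
end

section
/- Let r be a positive integer, w = (w₁, w₁', w₂, w₂') ∈ ℤ≥0⁴, and let v' = (v₁', v₂'), v = (v₁, v₂) ∈ ℤ≥0² with v₁' ≤ v₁ and v₂' ≤ v₂. Let (x₁, x₂, y₁, …, y_r) ∈ E_w satisfy rank A = v₁' and rank B = v₂'. Then there is a bijection between the fiber F = {(X₁, X₂) : X₁ ⊆ ℂ^{w₁'} a subspace with dim X₁ = v₁ containing the column space of A, and X₂ ⊆ ℂ^{w₂'} × (ℂ^{w₁'})^r a subspace with dim X₂ = v₂ that is contained in ℂ^{w₂'} × X₁^{×r} and contains the column space of B} and the set 𝓜 = {(X₁', X₂') : X₁' ⊆ ℂ^{w₁'−v₁'} a subspace with dim X₁' = v₁ − v₁', and X₂' ⊆ ℂ^{w₂'+r·v₁'−v₂'} × (X₁')^{×r} a subspace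 with dim X₂' = v₂ − v₂'}. (This identifies the fiber of π : 𝓕̃_{v,w} → E_{v,w} over a point of the stratum E°_{v',w} with the Grassmannian-bundle 𝓜.) -/
/-!
Choose a surjection `f : ℂ^{w₁'} → ℂ^{w₁'-v₁'}` with kernel `V₁ = col A`. Since every block of
`B` has its columns in `V₁`, `V₂ = col B` lies in `W = ℂ^{w₂'} × V₁^{×r} = ker (f^{×r})`, which has
dimension `w₂' + r·v₁'`; so `f^{×r}` extends to a surjection
`Ψ : ℂ^{w₂'} × (ℂ^{w₁'})^r → ℂ^{w₂'+r·v₁'-v₂'} × (ℂ^{w₁'-v₁'})^r` with kernel `V₂` that acts as `f`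
on each of the `r` blocks. Pushing forward along `(f, Ψ)` is the correspondence between subspaces
containing the kernels and subspaces of the targets; it shifts dimensions by `(v₁', v₂')`, and
blockwise compatibility of `Ψ` with `f` makes it respect the condition `X₂ ⊆ ℂ^{w₂'} × X₁^{×r}`.
-/

open Matrix

noncomputable section

open Module LinearMap Function

section FiniteDimensional

variable {K M N P : Type*} [Field K] [AddCommGroup M] [Module K M] [AddCommGroup N] [Module K N]
  [AddCommGroup P] [Module K P] [FiniteDimensional K M]

theorem finrank_map_add_finrank_ker_of_ker_le (f : M →ₗ[K] N) {p : Submodule K M}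
    (h : ker f ≤ p) : finrank K (p.map f) + finrank K (ker f) = finrank K p := by
  have := (f.domRestrict p).finrank_range_add_finrank_ker
  rwa [range_domRestrict, ker_domRestrict, (Submodule.comapSubtypeEquivOfLe h).finrank_eq] at this

theorem finrank_comap_eq_of_surjective {f : M →ₗ[K] N} (hf : Surjective f) (q : Submodule K N) :
    finrank K (q.comap f) = finrank K q + finrank K (ker f) := by
  have := finrank_map_add_finrank_ker_of_ker_le f (ker_le_comap (p := q) f)
  rwa [Submodule.map_comap_eq_of_surjective hf, eq_comm] at this

theorem exists_surjective_ker_eq [FiniteDimensional K N] (p : Submodule K M)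
    (h : finrank K p + finrank K N = finrank K M) :
    ∃ f : M →ₗ[K] N, Surjective f ∧ ker f = p := by
  have hquot := p.finrank_quotient_add_finrank
  let e : (M ⧸ p) ≃ₗ[K] N := LinearEquiv.ofFinrankEq _ _ (by omega)
  exact ⟨e.toLinearMap ∘ₗ p.mkQ, e.surjective.comp p.mkQ_surjective, by
    rw [LinearEquiv.ker_comp, Submodule.ker_mkQ]⟩

theorem exists_surjective_prod_ker_eq [FiniteDimensional K N] {g : M →ₗ[K] P} (hg : Surjective g)
    {p : Submodule K M} (hp : p ≤ ker g) (h : finrank K p + finrank K N = finrank K (ker g)) :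
    ∃ f : M →ₗ[K] N, Surjective (f.prod g) ∧ ker (f.prod g) = p := by
  obtain ⟨f₀, hf₀, hkf₀⟩ := exists_surjective_ker_eq (N := N) (p.comap (ker g).subtype)
    (by rwa [(Submodule.comapSubtypeEquivOfLe hp).finrank_eq])
  obtain ⟨f, hf⟩ := LinearMap.exists_extend f₀
  have hff₀ (w : ker g) : f w = f₀ w := LinearMap.congr_fun hf w
  refine ⟨f, ?_, ?_⟩
  · rintro ⟨a, b⟩
    obtain ⟨z, rfl⟩ := hg b
    obtain ⟨w, hw⟩ := hf₀ (a - f z)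
    refine ⟨z + w, ?_⟩
    simp [hff₀, hw, mem_ker.1 w.2]
  · ext z
    rw [ker_prod, Submodule.mem_inf]
    refine ⟨fun ⟨hfz, hgz⟩ => ?_, fun hz => ⟨?_, hp hz⟩⟩
    · have : (⟨z, hgz⟩ : ker g) ∈ ker f₀ := by rw [mem_ker, ← hff₀]; exact hfz
      rwa [hkf₀] at this
    · have : (⟨z, hp hz⟩ : ker g) ∈ ker f₀ := by rw [hkf₀]; exact hz
      exact (hff₀ ⟨z, hp hz⟩).trans this

end FiniteDimensional

section Blocks

variable {r a b a' b' : ℕ}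

def blockProj (h : Fin r) : (Fin a ⊕ Fin r × Fin b → ℂ) →ₗ[ℂ] (Fin b → ℂ) :=
  funLeft ℂ ℂ fun i => Sum.inr (h, i)

theorem mem_prodSub {X : Submodule ℂ (Fin b → ℂ)} {z : Fin a ⊕ Fin r × Fin b → ℂ} :
    z ∈ prodSub r a b X ↔ ∀ h, blockProj h z ∈ X := by
  simp only [prodSub, Submodule.mem_iInf, Submodule.mem_comap]
  rfl

def blockwise (f : (Fin b → ℂ) →ₗ[ℂ] (Fin b' → ℂ)) :
    (Fin a ⊕ Fin r × Fin b → ℂ) →ₗ[ℂ] (Fin r → Fin b' → ℂ) :=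
  LinearMap.pi fun h => f ∘ₗ blockProj h

theorem ker_blockwise (f : (Fin b → ℂ) →ₗ[ℂ] (Fin b' → ℂ)) :
    ker (blockwise (a := a) (r := r) f) = prodSub r a b (ker f) := by
  ext z
  simp only [mem_ker, mem_prodSub, blockwise, pi_apply, LinearMap.comp_apply, funext_iff,
    Pi.zero_apply]

theorem blockwise_surjective {f : (Fin b → ℂ) →ₗ[ℂ] (Fin b' → ℂ)} (hf : Surjective f) :
    Surjective (blockwise (a := a) (r := r) f) := by
  intro t
  choose u hu using fun h => hf (t h)
  exact ⟨Sum.elim 0 fun p => u p.1 p.2, funext hu⟩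

theorem finrank_prodSub (X : Submodule ℂ (Fin b → ℂ)) :
    finrank ℂ (prodSub r a b X) = a + r * finrank ℂ X := by
  have hX : finrank ℂ X ≤ b := by simpa using X.finrank_le
  obtain ⟨f, hf, hkf⟩ := exists_surjective_ker_eq (N := Fin (b - finrank ℂ X) → ℂ) X
    (by simp; omega)
  have := (blockwise (a := a) (r := r) f).finrank_range_add_finrank_ker
  rw [range_eq_top.2 (blockwise_surjective hf), finrank_top, ker_blockwise, hkf] at this
  simp only [finrank_pi_fintype, Module.finrank_self, mul_one, Fintype.card_fin, Finset.sum_const,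
    Finset.card_univ, smul_eq_mul, Fintype.card_sum, Fintype.card_prod] at this
  rw [Nat.mul_sub] at this
  have : r * finrank ℂ X ≤ r * b := Nat.mul_le_mul_left r hX
  omega

theorem exists_surjective_ker_eq_of_le_prodSub {f : (Fin b → ℂ) →ₗ[ℂ] (Fin b' → ℂ)}
    (hf : Surjective f) {V : Submodule ℂ (Fin a ⊕ Fin r × Fin b → ℂ)}
    (hV : V ≤ prodSub r a b (ker f)) (hdim : finrank ℂ V + a' = a + r * finrank ℂ (ker f)) :
    ∃ Ψ : (Fin a ⊕ Fin r × Fin b → ℂ) →ₗ[ℂ] (Fin a' ⊕ Fin r × Fin b' → ℂ),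
      Surjective Ψ ∧ ker Ψ = V ∧ ∀ h, blockProj h ∘ₗ Ψ = f ∘ₗ blockProj h := by
  rw [← ker_blockwise] at hV
  obtain ⟨g, hg, hkg⟩ := exists_surjective_prod_ker_eq (N := Fin a' → ℂ)
    (blockwise_surjective hf) hV (by rw [ker_blockwise, finrank_prodSub, finrank_fin_fun, hdim])
  let e : (Fin a' ⊕ Fin r × Fin b' → ℂ) ≃ₗ[ℂ] (Fin a' → ℂ) × (Fin r → Fin b' → ℂ) :=
    (LinearEquiv.sumArrowLequivProdArrow _ _ ℂ ℂ).trans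
      ((LinearEquiv.refl ℂ _).prodCongr (LinearEquiv.curry ℂ ℂ _ _))
  refine ⟨e.symm.toLinearMap ∘ₗ g.prod (blockwise f), e.symm.surjective.comp hg,
    by rw [LinearEquiv.ker_comp, hkg], fun h => ?_⟩
  ext z i
  rfl

end Blocks

section Correspondence

variable {r a b a' b' : ℕ} {f : (Fin b → ℂ) →ₗ[ℂ] (Fin b' → ℂ)}
  {Ψ : (Fin a ⊕ Fin r × Fin b → ℂ) →ₗ[ℂ] (Fin a' ⊕ Fin r × Fin b' → ℂ)}

theorem map_le_prodSub_map (hΨ : ∀ h, blockProj h ∘ₗ Ψ = f ∘ₗ blockProj h)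
    {X₁ : Submodule ℂ (Fin b → ℂ)} {X₂ : Submodule ℂ (Fin a ⊕ Fin r × Fin b → ℂ)}
    (hX : X₂ ≤ prodSub r a b X₁) : X₂.map Ψ ≤ prodSub r a' b' (X₁.map f) := by
  rintro _ ⟨z, hz, rfl⟩
  refine mem_prodSub.2 fun h => ?_
  rw [← LinearMap.comp_apply, hΨ, LinearMap.comp_apply]
  exact Submodule.mem_map_of_mem (mem_prodSub.1 (hX hz) h)

theorem comap_le_prodSub_comap (hΨ : ∀ h, blockProj h ∘ₗ Ψ = f ∘ₗ blockProj h)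
    {Y₁ : Submodule ℂ (Fin b' → ℂ)} {Y₂ : Submodule ℂ (Fin a' ⊕ Fin r × Fin b' → ℂ)}
    (hY : Y₂ ≤ prodSub r a' b' Y₁) : Y₂.comap Ψ ≤ prodSub r a b (Y₁.comap f) := by
  intro z hz
  refine mem_prodSub.2 fun h => ?_
  rw [Submodule.mem_comap, ← LinearMap.comp_apply, ← hΨ, LinearMap.comp_apply]
  exact mem_prodSub.1 (hY hz) h

def subspacePairEquiv (hf : Surjective f) {V₁ : Submodule ℂ (Fin b → ℂ)} (hkf : ker f = V₁)
    (hΨ : Surjective Ψ) {V₂ : Submodule ℂ (Fin a ⊕ Fin r × Fin b → ℂ)} (hkΨ : ker Ψ = V₂)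
    (hfΨ : ∀ h, blockProj h ∘ₗ Ψ = f ∘ₗ blockProj h) {n₁ n₂ : ℕ}
    (h₁ : finrank ℂ V₁ ≤ n₁) (h₂ : finrank ℂ V₂ ≤ n₂) :
    {p : Submodule ℂ (Fin b → ℂ) × Submodule ℂ (Fin a ⊕ Fin r × Fin b → ℂ) //
      finrank ℂ p.1 = n₁ ∧ finrank ℂ p.2 = n₂ ∧ p.2 ≤ prodSub r a b p.1 ∧ V₁ ≤ p.1 ∧ V₂ ≤ p.2} ≃
    {q : Submodule ℂ (Fin b' → ℂ) × Submodule ℂ (Fin a' ⊕ Fin r × Fin b' → ℂ) //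
      finrank ℂ q.1 = n₁ - finrank ℂ V₁ ∧ finrank ℂ q.2 = n₂ - finrank ℂ V₂ ∧
        q.2 ≤ prodSub r a' b' q.1} where
  toFun p := ⟨(p.1.1.map f, p.1.2.map Ψ), by
    obtain ⟨hX₁, hX₂, hX, hVX₁, hVX₂⟩ := p.2
    subst hkf hkΨ
    dsimp only
    have := finrank_map_add_finrank_ker_of_ker_le f hVX₁
    have := finrank_map_add_finrank_ker_of_ker_le Ψ hVX₂
    exact ⟨by omega, by omega, map_le_prodSub_map hfΨ hX⟩⟩
  invFun q := ⟨(q.1.1.comap f, q.1.2.comap Ψ), by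
    obtain ⟨hY₁, hY₂, hY⟩ := q.2
    subst hkf hkΨ
    dsimp only
    have := finrank_comap_eq_of_surjective hf q.1.1
    have := finrank_comap_eq_of_surjective hΨ q.1.2
    exact ⟨by omega, by omega, comap_le_prodSub_comap hfΨ hY, ker_le_comap f, ker_le_comap Ψ⟩⟩
  left_inv p := by
    obtain ⟨⟨X₁, X₂⟩, -, -, -, hVX₁, hVX₂⟩ := p
    subst hkf hkΨ
    ext1
    simp only [Submodule.comap_map_eq, sup_eq_left.2 hVX₁, sup_eq_left.2 hVX₂]
  right_inv q := by
    ext1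
    simp only [Submodule.map_comap_eq_of_surjective hf, Submodule.map_comap_eq_of_surjective hΨ]

end Correspondence

theorem range_matB_mulVecLin_le_prodSub {r m n a c : ℕ} (x₁ : Matrix (Fin m) (Fin a) ℂ)
    (x₂ : Matrix (Fin c) (Fin n) ℂ) (y : Fin r → Matrix (Fin m) (Fin n) ℂ) :
    range (matB x₂ y).mulVecLin ≤ prodSub r c m (range (matA x₁ y).mulVecLin) := by
  rintro _ ⟨v, rfl⟩
  refine mem_prodSub.2 fun h => ⟨Sum.elim 0 (Function.uncurry (Pi.single h v)), ?_⟩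
  ext i
  simp [blockProj, matA, matB, Matrix.mulVec, dotProduct, Fintype.sum_prod_type, Pi.single_apply,
    ite_apply, mul_ite, Finset.sum_ite_irrel]

theorem stmt_7_general (r w₁ w₁' w₂ w₂' v₁ v₂ v₁' v₂' : ℕ)
    (h₁ : v₁' ≤ v₁) (h₂ : v₂' ≤ v₂)
    (x₁ : Matrix (Fin w₁') (Fin w₁) ℂ) (x₂ : Matrix (Fin w₂') (Fin w₂) ℂ)
    (y : Fin r → Matrix (Fin w₁') (Fin w₂) ℂ)
    (hA : (matA x₁ y).rank = v₁') (hB : (matB x₂ y).rank = v₂') :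
    Nonempty (
      {p : Submodule ℂ (Fin w₁' → ℂ) × Submodule ℂ (Fin w₂' ⊕ Fin r × Fin w₁' → ℂ) //
        Module.finrank ℂ p.1 = v₁ ∧ Module.finrank ℂ p.2 = v₂ ∧
        p.2 ≤ prodSub r w₂' w₁' p.1 ∧
        LinearMap.range (matA x₁ y).mulVecLin ≤ p.1 ∧
        LinearMap.range (matB x₂ y).mulVecLin ≤ p.2} ≃
      {q : Submodule ℂ (Fin (w₁' - v₁') → ℂ) ×
          Submodule ℂ (Fin (w₂' + r * v₁' - v₂') ⊕ Fin r × Fin (w₁' - v₁') → ℂ) //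
        Module.finrank ℂ q.1 = v₁ - v₁' ∧ Module.finrank ℂ q.2 = v₂ - v₂' ∧
        q.2 ≤ prodSub r (w₂' + r * v₁' - v₂') (w₁' - v₁') q.1}) := by
  subst hA hB
  set V₁ := range (matA x₁ y).mulVecLin
  set V₂ := range (matB x₂ y).mulVecLin
  have hV₁ : finrank ℂ V₁ ≤ w₁' := by simpa using V₁.finrank_le
  obtain ⟨f, hf, hkf⟩ := exists_surjective_ker_eq (N := Fin (w₁' - finrank ℂ V₁) → ℂ) V₁
    (by rw [finrank_fin_fun, finrank_fin_fun]; omega)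
  have hV₂ : V₂ ≤ prodSub r w₂' w₁' V₁ := range_matB_mulVecLin_le_prodSub x₁ x₂ y
  have hV₂' := Submodule.finrank_mono hV₂
  rw [finrank_prodSub] at hV₂'
  obtain ⟨Ψ, hΨ, hkΨ, hfΨ⟩ := exists_surjective_ker_eq_of_le_prodSub
    (a' := w₂' + r * finrank ℂ V₁ - finrank ℂ V₂) hf (hkf ▸ hV₂) (by rw [hkf]; omega)
  exact ⟨subspacePairEquiv hf hkf hΨ hkΨ hfΨ h₁ h₂⟩

theorem stmt_7 (r w₁ w₁' w₂ w₂' v₁ v₂ v₁' v₂' : ℕ) (hr : 0 < r)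
    (h₁ : v₁' ≤ v₁) (h₂ : v₂' ≤ v₂)
    (x₁ : Matrix (Fin w₁') (Fin w₁) ℂ) (x₂ : Matrix (Fin w₂') (Fin w₂) ℂ)
    (y : Fin r → Matrix (Fin w₁') (Fin w₂) ℂ)
    (hA : (matA x₁ y).rank = v₁') (hB : (matB x₂ y).rank = v₂') :
    Nonempty (
      {p : Submodule ℂ (Fin w₁' → ℂ) × Submodule ℂ (Fin w₂' ⊕ Fin r × Fin w₁' → ℂ) //
        Module.finrank ℂ p.1 = v₁ ∧ Module.finrank ℂ p.2 = v₂ ∧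
        p.2 ≤ prodSub r w₂' w₁' p.1 ∧
        LinearMap.range (matA x₁ y).mulVecLin ≤ p.1 ∧
        LinearMap.range (matB x₂ y).mulVecLin ≤ p.2} ≃
      {q : Submodule ℂ (Fin (w₁' - v₁') → ℂ) ×
          Submodule ℂ (Fin (w₂' + r * v₁' - v₂') ⊕ Fin r × Fin (w₁' - v₁') → ℂ) //
        Module.finrank ℂ q.1 = v₁ - v₁' ∧ Module.finrank ℂ q.2 = v₂ - v₂' ∧
        q.2 ≤ prodSub r (w₂' + r * v₁' - v₂') (w₁' - v₁') q.1}) :=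
  stmt_7_general r w₁ w₁' w₂ w₂' v₁ v₂ v₁' v₂' h₁ h₂ x₁ x₂ y hA hB
end
end
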